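/- arXiv:math/9901089 — 3 statements merged into one kernel-verified Lean document; each statement's English description precedes it below -/
import Mathlib

section
/- Let n ≥ 3, -2 < l < 0, p > 1, and let f : (0,∞) → R be continuous, positive, with f(s) ≤ C₂ s^l for s ≥ 1 and ∫_0^1 s f(s) ds ≤ C₃ < ∞. Suppose u : [0,∞) → R is continuous, satisfies 0 < u(s) ≤ α for all s ≥ 0, and satisfies the integral equation u(r) = α − (1/(n−2))∫_0^r {1 − (s/r)^{n−2}} s f(s) u(s)^p ds. If r_α ≥ 1 is such that u(r_α) = α/2, then ((n−2)/2)·α^{1−p} ≤ C₃ + (C₂/(2+l))·r_α^{2+l}. -/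
/-!
Evaluating the integral equation at `rα` gives `∫₀^rα (1 - (s/rα)^(n-2)) s f(s) u(s)^p ds
= (n-2) α / 2`. The kernel lies in `[0, 1]` and `u ≤ α`, so the left side is at most
`α^p ∫₀^rα s f(s) ds`, and splitting this integral at `1` bounds it by
`α^p (C₃ + C₂ rα^(2+l) / (2+l))` using `f(s) ≤ C₂ s^l` on `[1, rα]`.
-/

open Real intervalIntegral MeasureTheory Set

lemma kernel_mul_le {r s q F v α p : ℝ} (hr : 0 < r) (hs : 0 < s) (hsr : s ≤ r) (hq : 0 ≤ q)
    (hF : 0 ≤ F) (hv : 0 ≤ v) (hvα : v ≤ α) (hp : 0 ≤ p) :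
    (1 - (s / r) ^ q) * s * F * v ^ p ≤ α ^ p * (s * F) := by
  have hw₀ : 0 ≤ (s / r) ^ q := by positivity
  have hw₁ : (s / r) ^ q ≤ 1 := rpow_le_one (by positivity) ((div_le_one hr).2 hsr) hq
  have hvp : v ^ p ≤ α ^ p := rpow_le_rpow hv hvα hp
  have hsF : 0 ≤ s * F := by positivity
  calc (1 - (s / r) ^ q) * s * F * v ^ p = (1 - (s / r) ^ q) * (s * F * v ^ p) := by ring
    _ ≤ 1 * (s * F * v ^ p) := by gcongr; linarith
    _ ≤ α ^ p * (s * F) := by rw [one_mul, mul_comm]; gcongr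

lemma mul_le_kernel_mul {r s q F m v p : ℝ} (hr : 0 < r) (hs : 0 ≤ s) (hsr : s ≤ r / 2)
    (hq : 1 ≤ q) (hF : 0 ≤ s * F) (hm : 0 ≤ m) (hmv : m ≤ v) (hp : 0 ≤ p) :
    m ^ p / 2 * (s * F) ≤ (1 - (s / r) ^ q) * s * F * v ^ p := by
  have hsr' : s / r ≤ 1 / 2 := by rw [div_le_iff₀ hr]; linarith
  have hw : (s / r) ^ q ≤ 1 / 2 :=
    (rpow_le_self_of_le_one (by positivity) (by linarith) hq).trans hsr'
  have hmp : m ^ p ≤ v ^ p := rpow_le_rpow hm hmv hp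
  have hmp₀ : 0 ≤ m ^ p := by positivity
  calc m ^ p / 2 * (s * F) = 1 / 2 * (s * F) * m ^ p := by ring
    _ ≤ (1 - (s / r) ^ q) * (s * F) * m ^ p := by gcongr; linarith
    _ ≤ (1 - (s / r) ^ q) * (s * F) * v ^ p := by
        gcongr; exact mul_nonneg (by linarith) hF
    _ = (1 - (s / r) ^ q) * s * F * v ^ p := by ring

lemma intervalIntegrable_of_norm_le_mul {h G : ℝ → ℝ} {a b c : ℝ} (ha : 0 < a)
    (hab : a ≤ b) (hh : ContinuousOn h (Ioi 0)) (hG : IntervalIntegrable G volume 0 a)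
    (hle : ∀ s ∈ Ioc 0 a, ‖h s‖ ≤ c * G s) :
    IntervalIntegrable h volume 0 b := by
  have hnear : IntervalIntegrable h volume 0 a := by
    refine (hG.const_mul c).mono_fun ?_ ?_
    · rw [uIoc_of_le ha.le]
      exact (hh.mono fun s hs => hs.1).aestronglyMeasurable measurableSet_Ioc
    · rw [uIoc_of_le ha.le, Filter.EventuallyLE, ae_restrict_iff' measurableSet_Ioc]
      refine Filter.Eventually.of_forall fun s hs => (hle s hs).trans ?_
      exact le_abs_self _
  refine hnear.trans (ContinuousOn.intervalIntegrable (hh.mono ?_))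
  rw [uIcc_of_le hab]
  exact fun s hs => ha.trans_le hs.1

lemma integral_mul_le_of_le_rpow {f : ℝ → ℝ} {C C' l r : ℝ} (hl : -2 < l) (hr : 1 ≤ r)
    (hC : 0 ≤ C) (hint : IntervalIntegrable (fun s => s * f s) volume 0 r)
    (hf₀ : ∫ s in 0..1, s * f s ≤ C') (hfl : ∀ s, 1 ≤ s → f s ≤ C * s ^ l) :
    ∫ s in 0..r, s * f s ≤ C' + C / (2 + l) * r ^ (2 + l) := by
  have hint₁ : IntervalIntegrable (fun s => s * f s) volume 1 r :=
    hint.mono_set <| by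
      rw [uIcc_of_le hr, uIcc_of_le (by linarith)]
      exact Icc_subset_Icc zero_le_one le_rfl
  have hint' : IntervalIntegrable (fun s => C * s ^ (1 + l)) volume 1 r :=
    (intervalIntegral.intervalIntegrable_rpow' (by linarith)).const_mul C
  have htail : ∫ s in 1..r, s * f s ≤ C / (2 + l) * r ^ (2 + l) :=
    calc ∫ s in 1..r, s * f s ≤ ∫ s in 1..r, C * s ^ (1 + l) := by
          refine integral_mono_on hr hint₁ hint' fun s hs => ?_
          rw [rpow_add (one_pos.trans_le hs.1), rpow_one]
          linarith [mul_le_mul_of_nonneg_left (hfl s hs.1) (zero_le_one.trans hs.1)]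
      _ = C / (2 + l) * (r ^ (2 + l) - 1) := by
          rw [intervalIntegral.integral_const_mul, integral_rpow (Or.inl (by linarith))]
          norm_num [show 1 + l + 1 = 2 + l by ring]
          ring
      _ ≤ C / (2 + l) * r ^ (2 + l) := by
          have : 0 ≤ C / (2 + l) := div_nonneg hC (by linarith)
          nlinarith
  rw [← integral_add_adjacent_intervals (hint.mono_set ?_) hint₁]
  · linarith
  · rw [uIcc_of_le zero_le_one, uIcc_of_le (by linarith)]
    exact Icc_subset_Icc le_rfl hr

/- The hypothesis `∫ s in 0..1, s * f s ≤ C₃` carries no information unless `s * f s` is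
integrable, since otherwise the integral is `0`; here integrability comes from the equation. -/
lemma intervalIntegrable_mul_of_kernel {f u : ℝ → ℝ} {r q p : ℝ} (hr : 0 < r) (hq : 1 ≤ q)
    (hp : 0 ≤ p) (hfc : ContinuousOn f (Ioi 0)) (hf : ∀ s, 0 < s → 0 ≤ f s)
    (huc : ContinuousOn u (Icc 0 r)) (hu : ∀ s ∈ Icc 0 r, 0 < u s)
    (hg : IntervalIntegrable (fun s => (1 - (s / r) ^ q) * s * f s * u s ^ p) volume 0 r) :
    IntervalIntegrable (fun s => s * f s) volume 0 r := by
  obtain ⟨x₀, hx₀, hmin⟩ := isCompact_Icc.exists_isMinOn (nonempty_Icc.2 hr.le) huc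
  have hmp : 0 < u x₀ ^ p := rpow_pos_of_pos (hu x₀ hx₀) p
  refine intervalIntegrable_of_norm_le_mul (c := 2 / u x₀ ^ p) (half_pos hr) (by linarith)
    (continuousOn_id.mul hfc) (hg.mono_set ?_) fun s hs => ?_
  · rw [uIcc_of_le hr.le, uIcc_of_le (by linarith)]
    exact Icc_subset_Icc le_rfl (by linarith)
  · have hsf : 0 ≤ s * f s := mul_nonneg hs.1.le (hf s hs.1)
    have hkernel := mul_le_kernel_mul hr hs.1.le hs.2 hq hsf (hu x₀ hx₀).le
      (hmin ⟨hs.1.le, by linarith [hs.2]⟩) hp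
    rw [norm_of_nonneg hsf, div_mul_eq_mul_div, le_div_iff₀ hmp]
    linarith

theorem stmt_4_general (n l p α C₂ C₃ rα : ℝ) (hn : 3 ≤ n) (hl : -2 < l)
    (hp : 1 < p) (hα : 0 < α)
    (f u : ℝ → ℝ)
    (hfc : ContinuousOn f (Set.Ioi 0)) (hfpos : ∀ s, 0 < s → 0 < f s)
    (hfl : ∀ s, 1 ≤ s → f s ≤ C₂ * s ^ l)
    (hfi : (∫ s in (0 : ℝ)..1, s * f s) ≤ C₃)
    (huc : Continuous u) (hub : ∀ s : ℝ, 0 ≤ s → 0 < u s ∧ u s ≤ α)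
    (hie : ∀ r : ℝ, 0 < r →
      u r = α - (1 / (n - 2)) * ∫ s in (0 : ℝ)..r, (1 - (s / r) ^ (n - 2)) * s * f s * u s ^ p)
    (hrα : 1 ≤ rα) (hhalf : u rα = α / 2) :
    (n - 2) / 2 * α ^ (1 - p) ≤ C₃ + C₂ / (2 + l) * rα ^ (2 + l) := by
  have hr : 0 < rα := by linarith
  have hαrα := hie rα hr
  rw [hhalf] at hαrα
  set g := fun s => (1 - (s / rα) ^ (n - 2)) * s * f s * u s ^ p
  have hI : ∫ s in 0..rα, g s = (n - 2) * α / 2 := by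
    field_simp [show n - 2 ≠ 0 by linarith] at hαrα
    linarith
  have hg : IntervalIntegrable g volume 0 rα := by
    by_contra h
    rw [integral_undef h] at hI
    nlinarith
  have hφ : IntervalIntegrable (fun s => s * f s) volume 0 rα :=
    intervalIntegrable_mul_of_kernel hr (by linarith) (by linarith) hfc
      (fun s hs => (hfpos s hs).le) huc.continuousOn (fun s hs => (hub s hs.1).1) hg
  have hmono : ∫ s in 0..rα, g s ≤ α ^ p * ∫ s in 0..rα, s * f s := by
    rw [← intervalIntegral.integral_const_mul]
    exact integral_mono_on_of_le_Ioo hr.le hg (hφ.const_mul _) fun s hs =>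
      kernel_mul_le hr hs.1 hs.2.le (by linarith) (hfpos s hs.1).le (hub s hs.1.le).1.le
        (hub s hs.1.le).2 (by linarith)
  have hC₂ : 0 ≤ C₂ := by
    have h := hfl 1 le_rfl
    rw [one_rpow, mul_one] at h
    linarith [hfpos 1 one_pos]
  have hbound := integral_mul_le_of_le_rpow hl hrα hC₂ hφ hfi hfl
  have hαp : 0 < α ^ p := by positivity
  rw [rpow_sub hα, rpow_one, ← mul_div_assoc, div_le_iff₀ hαp]
  nlinarith

theorem stmt_4 (n l p α C₂ C₃ rα : ℝ) (hn : 3 ≤ n) (hl : -2 < l) (hl' : l < 0)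
    (hp : 1 < p) (hα : 0 < α)
    (f u : ℝ → ℝ)
    (hfc : ContinuousOn f (Set.Ioi 0)) (hfpos : ∀ s, 0 < s → 0 < f s)
    (hfl : ∀ s, 1 ≤ s → f s ≤ C₂ * s ^ l)
    (hfi : (∫ s in (0 : ℝ)..1, s * f s) ≤ C₃)
    (huc : Continuous u) (hub : ∀ s : ℝ, 0 ≤ s → 0 < u s ∧ u s ≤ α)
    (hie : ∀ r : ℝ, 0 < r →
      u r = α - (1 / (n - 2)) * ∫ s in (0 : ℝ)..r, (1 - (s / r) ^ (n - 2)) * s * f s * u s ^ p)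
    (hrα : 1 ≤ rα) (hhalf : u rα = α / 2) :
    (n - 2) / 2 * α ^ (1 - p) ≤ C₃ + C₂ / (2 + l) * rα ^ (2 + l) :=
  stmt_4_general n l p α C₂ C₃ rα hn hl hp hα f u hfc hfpos hfl hfi huc hub hie hrα hhalf
end

section
/- Let n ≥ 3, p > 1, and let f : (0,∞) → R be continuous and positive. Suppose u : [0,∞) → R is continuous with u(0) = α > 0, u nonincreasing, and satisfies the integral equation u(r) = α − (1/(n−2))∫_0^r {1 − (s/r)^{n−2}} s f(s) (u⁺(s))^p ds for all r > 0. If r_α > 0 satisfies u(r_α) = α/2, then (α/2)^p ∫_0^{r_α} {1 − (s/r_α)^{n−2}} s f(s) ds ≤ ((n−2)/2)·α ≤ α^p ∫_0^{r_α} s f(s) ds. -/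
open Real intervalIntegral MeasureTheory

theorem stmt_5 (n p α rα : ℝ) (hn : 3 ≤ n) (hp : 1 < p) (hα : 0 < α)
    (f u : ℝ → ℝ)
    (hfc : ContinuousOn f (Set.Ioi 0)) (hfpos : ∀ s, 0 < s → 0 < f s)
    (huc : Continuous u) (hu0 : u 0 = α) (hmono : AntitoneOn u (Set.Ici 0))
    (hie : ∀ r : ℝ, 0 < r →
      u r = α - (1 / (n - 2)) *
        ∫ s in (0 : ℝ)..r, (1 - (s / r) ^ (n - 2)) * s * f s * max (u s) 0 ^ p)
    (hrα : 0 < rα) (hhalf : u rα = α / 2) :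
    (α / 2) ^ p * (∫ s in (0 : ℝ)..rα, (1 - (s / rα) ^ (n - 2)) * s * f s) ≤ (n - 2) / 2 * α ∧
    (n - 2) / 2 * α ≤ α ^ p * ∫ s in (0 : ℝ)..rα, s * f s := by
  have hn2 : (1:ℝ) ≤ n - 2 := by linarith
  have hn2p : (0:ℝ) < n - 2 := by linarith
  have hp0 : (0:ℝ) ≤ p := by linarith
  have hα2 : (0:ℝ) < α / 2 := by linarith
  have hαp : (0:ℝ) < (α/2) ^ p := Real.rpow_pos_of_pos hα2 p
  set g : ℝ → ℝ := fun s => (1 - (s / rα) ^ (n - 2)) * s * f s * max (u s) 0 ^ p with hgdef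
  set h1 : ℝ → ℝ := fun s => (1 - (s / rα) ^ (n - 2)) * s * f s with h1def
  set h2 : ℝ → ℝ := fun s => s * f s with h2def
  -- value of the main integral
  have hI : (∫ s in (0:ℝ)..rα, g s) = (n - 2) * (α / 2) := by
    have h := hie rα hrα
    rw [hhalf] at h
    have hne : n - 2 ≠ 0 := by linarith
    have h2' : (1/(n-2)) * (∫ s in (0:ℝ)..rα, g s) = α / 2 := by linarith
    calc (∫ s in (0:ℝ)..rα, g s)
        = (n-2) * ((1/(n-2)) * (∫ s in (0:ℝ)..rα, g s)) := by field_simp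
      _ = (n-2) * (α/2) := by rw [h2']
  -- integrability of g
  have hgI : IntervalIntegrable g volume 0 rα := by
    by_contra h
    rw [intervalIntegral.integral_undef h] at hI
    nlinarith
  have hgIoc : IntegrableOn g (Set.Ioc 0 rα) :=
    (intervalIntegrable_iff_integrableOn_Ioc_of_le hrα.le).1 hgI
  -- bounds for u
  have hu_mem : ∀ s ∈ Set.Icc (0:ℝ) rα, α/2 ≤ u s ∧ u s ≤ α := by
    intro s hs
    refine ⟨?_, ?_⟩
    · calc α/2 = u rα := hhalf.symm
        _ ≤ u s := hmono (Set.mem_Ici.2 hs.1) (Set.mem_Ici.2 hrα.le) hs.2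
    · calc u s ≤ u 0 := hmono (Set.mem_Ici.2 le_rfl) (Set.mem_Ici.2 hs.1) hs.1
      _ = α := hu0
  have hm_mem : ∀ s ∈ Set.Icc (0:ℝ) rα,
      (α/2)^p ≤ max (u s) 0 ^ p ∧ max (u s) 0 ^ p ≤ α ^ p := by
    intro s hs
    obtain ⟨hl, hr⟩ := hu_mem s hs
    rw [max_eq_left (by linarith)]
    exact ⟨Real.rpow_le_rpow hα2.le hl hp0, Real.rpow_le_rpow (by linarith) hr hp0⟩
  -- bounds for the weight factor
  have hAB : ∀ s ∈ Set.Icc (0:ℝ) rα,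
      0 ≤ 1 - (s/rα)^(n-2) ∧ 1 - (s/rα)^(n-2) ≤ 1 := by
    intro s hs
    have h0 : 0 ≤ s / rα := div_nonneg hs.1 hrα.le
    have h1' : s / rα ≤ 1 := (div_le_one hrα).2 hs.2
    have hb1 := Real.rpow_le_one h0 h1' (by linarith : (0:ℝ) ≤ n - 2)
    have hb0 := Real.rpow_nonneg h0 (n-2)
    constructor <;> linarith
  -- continuity of h1 and h2 on Ioc
  have hcw : Continuous (fun s : ℝ => 1 - (s / rα) ^ (n - 2)) := by
    exact continuous_const.sub ((continuous_id.div_const rα).rpow_const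
      (fun x => Or.inr (by linarith)))
  have hcont1 : ContinuousOn h1 (Set.Ioc 0 rα) := by
    exact ((hcw.continuousOn.mul continuousOn_id).mul (hfc.mono (fun x hx => hx.1)))
  have hcont2 : ContinuousOn h2 (Set.Ioc 0 rα) :=
    continuousOn_id.mul (hfc.mono (fun x hx => hx.1))
  -- key pointwise inequalities
  have hkey : ∀ s ∈ Set.Ioc (0:ℝ) rα, (α/2)^p * h1 s ≤ g s ∧ g s ≤ α^p * h2 s ∧ 0 ≤ h1 s ∧ 0 ≤ h2 s := by
    intro s hs
    have hsIcc : s ∈ Set.Icc (0:ℝ) rα := ⟨hs.1.le, hs.2⟩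
    have hfpos' := hfpos s hs.1
    obtain ⟨hA0, hA1⟩ := hAB s hsIcc
    obtain ⟨hm0, hm1⟩ := hm_mem s hsIcc
    have hh2 : 0 ≤ h2 s := mul_nonneg hs.1.le hfpos'.le
    have hh1 : 0 ≤ h1 s := by
      have : h1 s = (1 - (s/rα)^(n-2)) * h2 s := by simp [h1def, h2def]; ring
      rw [this]; exact mul_nonneg hA0 hh2
    have hgs : g s = h1 s * (max (u s) 0 ^ p) := rfl
    refine ⟨?_, ?_, hh1, hh2⟩
    · calc (α/2)^p * h1 s = h1 s * (α/2)^p := mul_comm _ _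
        _ ≤ h1 s * (max (u s) 0 ^ p) := mul_le_mul_of_nonneg_left hm0 hh1
        _ = g s := hgs.symm
    · rw [hgs]
      have hle : h1 s ≤ h2 s := by
        have : h1 s = (1 - (s/rα)^(n-2)) * h2 s := by simp [h1def, h2def]; ring
        rw [this]
        nlinarith
      calc h1 s * (max (u s) 0 ^ p) ≤ h2 s * α^p :=
            mul_le_mul hle hm1 (by positivity) hh2
        _ = α^p * h2 s := mul_comm _ _
  -- integrability of h1
  have hh1I : IntervalIntegrable h1 volume 0 rα := by
    rw [intervalIntegrable_iff_integrableOn_Ioc_of_le hrα.le]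
    apply MeasureTheory.Integrable.mono'
      (hgIoc.const_mul (((α/2)^p)⁻¹))
      (hcont1.aestronglyMeasurable measurableSet_Ioc)
    rw [MeasureTheory.ae_restrict_iff' measurableSet_Ioc]
    filter_upwards with s hs
    obtain ⟨hkl, hkr, hh1, hh2⟩ := hkey s hs
    rw [Real.norm_of_nonneg hh1]
    calc h1 s = ((α/2)^p)⁻¹ * ((α/2)^p * h1 s) := by field_simp
      _ ≤ ((α/2)^p)⁻¹ * g s := mul_le_mul_of_nonneg_left hkl (inv_nonneg.2 hαp.le)
  -- integrability of h2 : split at rα/2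
  have hc1 : (0:ℝ) < 1 - (1/2:ℝ)^(n-2) := by
    have := Real.rpow_lt_one (by norm_num : (0:ℝ) ≤ 1/2) (by norm_num) hn2p
    linarith
  have hh2Ia : IntervalIntegrable h2 volume 0 (rα/2) := by
    rw [intervalIntegrable_iff_integrableOn_Ioc_of_le (by linarith)]
    have hgIoc' : IntegrableOn g (Set.Ioc 0 (rα/2)) :=
      hgIoc.mono_set (Set.Ioc_subset_Ioc le_rfl (by linarith))
    apply MeasureTheory.Integrable.mono'
      (hgIoc'.const_mul (((1 - (1/2:ℝ)^(n-2)) * (α/2)^p)⁻¹))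
      ((hcont2.mono (Set.Ioc_subset_Ioc le_rfl (by linarith))).aestronglyMeasurable measurableSet_Ioc)
    rw [MeasureTheory.ae_restrict_iff' measurableSet_Ioc]
    filter_upwards with s hs
    have hsIoc : s ∈ Set.Ioc (0:ℝ) rα := ⟨hs.1, by linarith [hs.2]⟩
    obtain ⟨hkl, hkr, hh1, hh2⟩ := hkey s hsIoc
    obtain ⟨hm0, hm1⟩ := hm_mem s ⟨hsIoc.1.le, hsIoc.2⟩
    rw [Real.norm_of_nonneg hh2]
    have hcpos : (0:ℝ) < (1 - (1/2:ℝ)^(n-2)) * (α/2)^p := mul_pos hc1 hαp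
    have hAge : 1 - (1/2:ℝ)^(n-2) ≤ 1 - (s/rα)^(n-2) := by
      have : (s/rα)^(n-2) ≤ (1/2:ℝ)^(n-2) := by
        apply Real.rpow_le_rpow (div_nonneg hs.1.le hrα.le) _ (by linarith)
        rw [div_le_div_iff₀ hrα (by norm_num)]
        linarith [hs.2]
      linarith
    have hkey2 : (1 - (1/2:ℝ)^(n-2)) * (α/2)^p * h2 s ≤ g s := by
      have hgs : g s = ((1 - (s/rα)^(n-2)) * h2 s) * (max (u s) 0 ^ p) := by
        simp only [hgdef, h2def]; ring
      rw [hgs]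
      have hA0 : (0:ℝ) ≤ 1 - (s/rα)^(n-2) := by linarith [hAge, hc1]
      nlinarith [mul_nonneg hA0 hh2, mul_le_mul_of_nonneg_right hAge hh2]
    calc h2 s = ((1 - (1/2:ℝ)^(n-2)) * (α/2)^p)⁻¹ * ((1 - (1/2:ℝ)^(n-2)) * (α/2)^p * h2 s) := by
          field_simp
      _ ≤ ((1 - (1/2:ℝ)^(n-2)) * (α/2)^p)⁻¹ * g s :=
          mul_le_mul_of_nonneg_left hkey2 (inv_nonneg.2 hcpos.le)
  have hh2Ib : IntervalIntegrable h2 volume (rα/2) rα := by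
    apply ContinuousOn.intervalIntegrable
    apply hcont2.mono ∘ fun h => h
    intro x hx
    rw [Set.uIcc_of_le (by linarith)] at hx
    exact ⟨by linarith [hx.1], hx.2⟩
  have hh2I : IntervalIntegrable h2 volume 0 rα := hh2Ia.trans hh2Ib
  -- pointwise inequalities on Icc (including the endpoint 0)
  have hptL : ∀ s ∈ Set.Icc (0:ℝ) rα, (α/2)^p * h1 s ≤ g s := by
    intro s hs
    rcases eq_or_lt_of_le hs.1 with h0 | h0
    · have h0' : s = 0 := h0.symm
      subst h0'
      simp [hgdef, h1def]
    · exact (hkey s ⟨h0, hs.2⟩).1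
  have hptR : ∀ s ∈ Set.Icc (0:ℝ) rα, g s ≤ α^p * h2 s := by
    intro s hs
    rcases eq_or_lt_of_le hs.1 with h0 | h0
    · have h0' : s = 0 := h0.symm
      subst h0'
      simp [hgdef, h2def]
    · exact (hkey s ⟨h0, hs.2⟩).2.1
  constructor
  · have hmon := intervalIntegral.integral_mono_on hrα.le (hh1I.const_mul ((α/2)^p)) hgI hptL
    rw [intervalIntegral.integral_const_mul] at hmon
    calc (α/2)^p * (∫ s in (0:ℝ)..rα, h1 s) ≤ ∫ s in (0:ℝ)..rα, g s := hmon
      _ = (n - 2) / 2 * α := by rw [hI]; ring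
  · have hmon := intervalIntegral.integral_mono_on hrα.le hgI (hh2I.const_mul (α^p)) hptR
    rw [intervalIntegral.integral_const_mul] at hmon
    calc (n - 2) / 2 * α = ∫ s in (0:ℝ)..rα, g s := by rw [hI]; ring
      _ ≤ α^p * ∫ s in (0:ℝ)..rα, h2 s := hmon
end

section
/- Let n ≥ 3, -2 < l < 0 with n + l > 0. The function f(r) = (c₁ + c₂r²)^{γ/2}(c₃ + c₄r²)^{ν/2} with c₁,c₂,c₃,c₄ > 0, −2 < γ + ν < 0, and c₁c₄γ + c₂c₃ν > 0 satisfies: f is continuous and positive on (0,∞); f(r) = O(r^{γ+ν}) as r → ∞; and the function h(r) = r·(d/dr)(r^{−(γ+ν)}f(r)) satisfies h(r) > 0 for all sufficiently small r > 0 and h(r) < 0 for all sufficiently large r. -/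
/-!
Factoring out `r^{-(γ+ν)} A^{γ/2-1} B^{ν/2-1} > 0`, where `A = c₁ + c₂ r²` and `B = c₃ + c₄ r²`,
leaves `h r` with the sign of `-(γ + ν) c₁ c₃ - (c₁ c₄ γ + c₂ c₃ ν) r²`: the leading `r⁴` terms
cancel because the exponent `-(γ + ν)` of `r` balances the total degree `γ + ν` of `f`.
Both coefficients are positive, so this quadratic is positive near `0` and negative near `∞`.
The growth bound holds because `A ^ (p / 2)` is `Θ(r ^ p)` at infinity for every real `p`.
-/

open Real Filter Topology Asymptotics

theorem continuous_add_mul_sq_rpow {a b : ℝ} (ha : 0 < a) (hb : 0 ≤ b) (p : ℝ) :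
    Continuous fun r : ℝ => (a + b * r ^ 2) ^ p :=
  (continuous_const.add (continuous_const.mul (continuous_pow 2))).rpow_const
    fun r => Or.inl (add_pos_of_pos_of_nonneg ha (mul_nonneg hb (sq_nonneg r))).ne'

theorem isTheta_add_mul_sq_rpow_atTop (a : ℝ) {b : ℝ} (hb : 0 < b) (p : ℝ) :
    (fun r : ℝ => (a + b * r ^ 2) ^ (p / 2)) =Θ[atTop] fun r => r ^ p := by
  have hsq : Tendsto (fun r : ℝ => b * r ^ 2) atTop atTop :=
    (tendsto_pow_atTop two_ne_zero).const_mul_atTop hb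
  have hequiv : (fun r : ℝ => b * r ^ 2 + a) ~[atTop] fun r => b * r ^ 2 :=
    IsEquivalent.refl.add_isLittleO
      (isLittleO_const_left.2 (Or.inr (tendsto_norm_atTop_atTop.comp hsq)))
  have htheta : (fun r : ℝ => a + b * r ^ 2) =Θ[atTop] fun r => r ^ 2 := by
    simpa only [add_comm a] using hequiv.isTheta.trans ((isTheta_refl _ _).const_mul_left hb.ne')
  calc (fun r : ℝ => (a + b * r ^ 2) ^ (p / 2)) =Θ[atTop] fun r => (r ^ 2) ^ (p / 2) :=
        htheta.rpow ((tendsto_atTop_add_const_left _ a hsq).eventually_ge_atTop 0)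
          (Eventually.of_forall fun r => sq_nonneg r)
    _ =ᶠ[atTop] fun r => r ^ p := by
        filter_upwards [eventually_ge_atTop 0] with r hr
        rw [← rpow_natCast, ← rpow_mul hr]
        ring_nf

theorem isBigO_add_mul_sq_rpow_mul_add_mul_sq_rpow_atTop (a₁ a₂ : ℝ) {b₁ b₂ : ℝ}
    (hb₁ : 0 < b₁) (hb₂ : 0 < b₂) (p q : ℝ) :
    (fun r : ℝ => (a₁ + b₁ * r ^ 2) ^ (p / 2) * (a₂ + b₂ * r ^ 2) ^ (q / 2)) =O[atTop]
      fun r => r ^ (p + q) := by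
  refine ((isTheta_add_mul_sq_rpow_atTop a₁ hb₁ p).isBigO.mul
    (isTheta_add_mul_sq_rpow_atTop a₂ hb₂ q).isBigO).trans_eventuallyEq ?_
  filter_upwards [eventually_gt_atTop 0] with r hr
  rw [rpow_add hr]

theorem hasDerivAt_add_mul_sq_rpow (a b p : ℝ) {r : ℝ} (h : a + b * r ^ 2 ≠ 0) :
    HasDerivAt (fun s : ℝ => (a + b * s ^ 2) ^ p)
      (2 * p * b * r * (a + b * r ^ 2) ^ (p - 1)) r := by
  have hbase : HasDerivAt (fun s : ℝ => a + b * s ^ 2) (b * (2 * r)) r := by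
    simpa using ((hasDerivAt_pow 2 r).const_mul b).const_add a
  convert hbase.rpow_const (p := p) (Or.inl h) using 1
  ring

theorem mul_deriv_rpow_neg_mul_add_mul_sq_rpow {c₁ c₂ c₃ c₄ γ ν r : ℝ} (hr : r ≠ 0)
    (hA : c₁ + c₂ * r ^ 2 ≠ 0) (hB : c₃ + c₄ * r ^ 2 ≠ 0) :
    r * deriv (fun s =>
        s ^ (-(γ + ν)) * ((c₁ + c₂ * s ^ 2) ^ (γ / 2) * (c₃ + c₄ * s ^ 2) ^ (ν / 2))) r =
      r ^ (-(γ + ν)) * (c₁ + c₂ * r ^ 2) ^ (γ / 2 - 1) * (c₃ + c₄ * r ^ 2) ^ (ν / 2 - 1) *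
        (-(c₁ * c₃ * (γ + ν)) - r ^ 2 * (c₁ * c₄ * γ + c₂ * c₃ * ν)) := by
  rw [((hasDerivAt_rpow_const (p := -(γ + ν)) (Or.inl hr)).fun_mul
    ((hasDerivAt_add_mul_sq_rpow c₁ c₂ _ hA).fun_mul
      (hasDerivAt_add_mul_sq_rpow c₃ c₄ _ hB))).deriv]
  have hpow : ∀ {x : ℝ} (p : ℝ), x ≠ 0 → x ^ p = x ^ (p - 1) * x := fun p hx => by
    rw [← rpow_add_one hx, sub_add_cancel]
  rw [hpow (-(γ + ν)) hr, hpow (γ / 2) hA, hpow (ν / 2) hB]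
  ring

theorem eventually_nhdsGT_zero_sub_sq_mul_pos {P : ℝ} (hP : 0 < P) (m : ℝ) :
    ∀ᶠ r in 𝓝[>] 0, 0 < P - r ^ 2 * m := by
  have : Tendsto (fun r : ℝ => P - r ^ 2 * m) (𝓝 0) (𝓝 P) := by
    simpa using (show Continuous fun r : ℝ => P - r ^ 2 * m by fun_prop).tendsto 0
  exact nhdsWithin_le_nhds (this.eventually_const_lt hP)

theorem eventually_atTop_sub_sq_mul_neg (P : ℝ) {m : ℝ} (hm : 0 < m) :
    ∀ᶠ r in atTop, P - r ^ 2 * m < 0 :=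
  (tendsto_atBot_add_const_left _ P
    (tendsto_neg_atTop_atBot.comp ((tendsto_pow_atTop two_ne_zero).atTop_mul_const hm))
    ).eventually_lt_atBot 0

theorem stmt_12_general (γ ν c₁ c₂ c₃ c₄ : ℝ)
    (hc₁ : 0 < c₁) (hc₂ : 0 < c₂) (hc₃ : 0 < c₃) (hc₄ : 0 < c₄)
    (hsum' : γ + ν < 0) (hmix : 0 < c₁ * c₄ * γ + c₂ * c₃ * ν)
    (f h : ℝ → ℝ)
    (hf : ∀ r : ℝ, f r = (c₁ + c₂ * r ^ 2) ^ (γ / 2) * (c₃ + c₄ * r ^ 2) ^ (ν / 2))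
    (hh : ∀ r : ℝ, h r = r * deriv (fun s => s ^ (-(γ + ν)) * f s) r) :
    ContinuousOn f (Set.Ioi 0) ∧
    (∀ r : ℝ, 0 < r → 0 < f r) ∧
    (∃ K > 0, ∀ᶠ r in atTop, |f r| ≤ K * r ^ (γ + ν)) ∧
    (∀ᶠ r in nhdsWithin 0 (Set.Ioi 0), 0 < h r) ∧
    (∀ᶠ r in atTop, h r < 0) := by
  have hA : ∀ r : ℝ, 0 < c₁ + c₂ * r ^ 2 := fun r => by positivity
  have hB : ∀ r : ℝ, 0 < c₃ + c₄ * r ^ 2 := fun r => by positivity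
  obtain rfl : f = fun r => (c₁ + c₂ * r ^ 2) ^ (γ / 2) * (c₃ + c₄ * r ^ 2) ^ (ν / 2) := funext hf
  have hfactor : ∀ r > 0, ∃ w > 0,
      h r = w * (-(c₁ * c₃ * (γ + ν)) - r ^ 2 * (c₁ * c₄ * γ + c₂ * c₃ * ν)) := fun r hr =>
    ⟨_, by positivity,
      (hh r).trans (mul_deriv_rpow_neg_mul_add_mul_sq_rpow hr.ne' (hA r).ne' (hB r).ne')⟩
  obtain ⟨K, hK, hbound⟩ :=
    (isBigO_add_mul_sq_rpow_mul_add_mul_sq_rpow_atTop c₁ c₃ hc₂ hc₄ γ ν).exists_pos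
  refine ⟨?_, fun r _ => by positivity, ⟨K, hK, ?_⟩, ?_, ?_⟩
  · exact ((continuous_add_mul_sq_rpow hc₁ hc₂.le _).mul
      (continuous_add_mul_sq_rpow hc₃ hc₄.le _)).continuousOn
  · filter_upwards [hbound.bound, eventually_gt_atTop 0] with r hr hr0
    rwa [Real.norm_eq_abs, Real.norm_of_nonneg (rpow_pos_of_pos hr0 _).le] at hr
  · filter_upwards [self_mem_nhdsWithin,
      eventually_nhdsGT_zero_sub_sq_mul_pos (P := -(c₁ * c₃ * (γ + ν)))
        (by nlinarith [mul_pos hc₁ hc₃]) _] with r hr hq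
    obtain ⟨w, hw, hhr⟩ := hfactor r hr
    exact hhr ▸ mul_pos hw hq
  · filter_upwards [eventually_gt_atTop 0, eventually_atTop_sub_sq_mul_neg _ hmix] with r hr hq
    obtain ⟨w, hw, hhr⟩ := hfactor r hr
    exact hhr ▸ mul_neg_of_pos_of_neg hw hq

theorem stmt_12 (n γ ν c₁ c₂ c₃ c₄ : ℝ) (hn : 3 ≤ n)
    (hc₁ : 0 < c₁) (hc₂ : 0 < c₂) (hc₃ : 0 < c₃) (hc₄ : 0 < c₄)
    (hsum : -2 < γ + ν) (hsum' : γ + ν < 0) (hmix : 0 < c₁ * c₄ * γ + c₂ * c₃ * ν)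
    (hnl : 0 < n + (γ + ν))
    (f h : ℝ → ℝ)
    (hf : ∀ r : ℝ, f r = (c₁ + c₂ * r ^ 2) ^ (γ / 2) * (c₃ + c₄ * r ^ 2) ^ (ν / 2))
    (hh : ∀ r : ℝ, h r = r * deriv (fun s => s ^ (-(γ + ν)) * f s) r) :
    ContinuousOn f (Set.Ioi 0) ∧
    (∀ r : ℝ, 0 < r → 0 < f r) ∧
    (∃ K > 0, ∀ᶠ r in atTop, |f r| ≤ K * r ^ (γ + ν)) ∧
    (∀ᶠ r in nhdsWithin 0 (Set.Ioi 0), 0 < h r) ∧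
    (∀ᶠ r in atTop, h r < 0) :=
  stmt_12_general γ ν c₁ c₂ c₃ c₄ hc₁ hc₂ hc₃ hc₄ hsum' hmix f h hf hh
end
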